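/- arXiv:1202.1077 — 7 statements merged into one kernel-verified Lean document; each statement's English description precedes it below -/
import Mathlib

section
/- Let U ⊆ ℝⁿ be open, let Γ and Γ̂ be symmetric Christoffel fields on U with difference tensor S, and suppose n ≥ 1. Let W ⊆ ℝ × U × ℝⁿ be an open set containing {0} × U × ℝⁿ and let r : W → ℝ be smooth with r(0,x,v) = 0 and (∂r/∂t)(0,x,v) = 1 for all (x,v) ∈ U × ℝⁿ. Assume that for every (x,v) ∈ U × ℝⁿ, every Γ-geodesic γ : I → U with 0 ∈ I, γ(0) = x, γ'(0) = v, and every t such that (t,x,v) ∈ W and s ↦ r(s,x,v) maps a neighborhood of t into I, the curve s ↦ γ(r(s,x,v)) satisfies the Γ̂-geodesic equation at t. Then there exists a smooth map α : U → (ℝⁿ)* (into the dual space of ℝⁿ) such that S(x)(v,w) = (1/2)·(α(x)(v)·w + α(x)(w)·v) for all x ∈ U and v,w ∈ ℝⁿ. -/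
/-
Let `γ` be the `Γ`-geodesic with `γ 0 = x`, `γ' 0 = v`. At `t = 0` the reparametrized curve
`γ ∘ r` has velocity `v` and acceleration `-Γ(v, v) + r''(0) v`; since it satisfies the
`Γ̂`-geodesic equation there, `S(x)(v, v)` is a multiple of `v`. A symmetric bilinear map with
`S(v, v) ∈ ℝ v` for every `v` is `½ (φ(v) w + φ(w) v)` for a linear form `φ`: polarizing
`S(v ± w, v ± w)` on an independent pair makes `φ` additive and gives the formula. Taking the
trace in `w` yields `φ(v) = 2/(n+1) tr S(v, ·)`, which is a linear, hence smooth, function of `S`.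
-/

open Set

/-- Vectors in `ℝⁿ`. -/
abbrev Vec (n : ℕ) : Type := Fin n → ℝ

/-- A Christoffel field on (an open subset of) `ℝⁿ`: a field of bilinear maps
`ℝⁿ × ℝⁿ → ℝⁿ`. -/
abbrev Christoffel (n : ℕ) : Type := Vec n → Vec n →L[ℝ] Vec n →L[ℝ] Vec n

/-- `γ` is a `Γ`-geodesic on the interval `I`, with values in `U`. -/
def IsGeodesic {n : ℕ} (Γ : Christoffel n) (U : Set (Vec n)) (I : Set ℝ)
    (γ : ℝ → Vec n) : Prop :=
  Set.MapsTo γ I U ∧ ContDiffOn ℝ (2 : ℕ∞) γ I ∧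
    ∀ t ∈ I, deriv (deriv γ) t = -(Γ (γ t) (deriv γ t) (deriv γ t))

open Filter Topology Module Submodule

section Algebra

variable {K E : Type*} [Field K] [AddCommGroup E] [Module K E]
  {S : E →ₗ[K] E →ₗ[K] E} {c : E → K}

lemma coeff_add_and_two_smul_eq_of_linearIndependent [CharZero K] (hS : ∀ v w, S v w = S w v)
    (hc : ∀ v, S v v = c v • v) {v w : E} (hvw : LinearIndependent K ![v, w]) :
    c (v + w) = c v + c w ∧ (2 : K) • S v w = c w • v + c v • w := by
  have hplus : c (v + w) • (v + w) = c v • v + c w • w + (2 : K) • S v w := by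
    rw [← hc, ← hc v, ← hc w]
    simp only [map_add, LinearMap.add_apply, hS w v]
    module
  have hminus : c (v - w) • (v - w) = c v • v + c w • w - (2 : K) • S v w := by
    rw [← hc, ← hc v, ← hc w]
    simp only [map_sub, LinearMap.sub_apply, hS w v]
    module
  obtain ⟨h₁, h₂⟩ := LinearIndependent.pair_iff.mp hvw
    (c (v + w) + c (v - w) - 2 * c v) (c (v + w) - c (v - w) - 2 * c w)
    (by linear_combination (norm := module) hplus + hminus)
  refine ⟨by linear_combination (h₁ + h₂) / 2, ?_⟩
  linear_combination (norm := module)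
    (1 / 2 : K) • (h₂ • v + h₁ • w - (hplus - hminus))

lemma coeff_smul_of_coeff_zero (hc : ∀ v, S v v = c v • v) (hc0 : c 0 = 0) (t : K) (v : E) :
    c (t • v) = t * c v := by
  rcases eq_or_ne t 0 with rfl | ht
  · simp [hc0]
  rcases eq_or_ne v 0 with rfl | hv
  · simp [hc0]
  have hsq : S (t • v) (t • v) = (t * t * c v) • v := by
    simp only [map_smul, LinearMap.smul_apply, hc v, smul_smul, mul_assoc]
  have h : (t * (c (t • v) - t * c v)) • v = 0 := by
    linear_combination (norm := module) hsq - hc (t • v)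
  simpa [ht, hv, sub_eq_zero] using h

theorem exists_linearMap_eq_of_forall_mem_span_singleton [CharZero K]
    (hS : ∀ v w, S v w = S w v) (h : ∀ v, S v v ∈ K ∙ v) :
    ∃ φ : E →ₗ[K] K, ∀ v w, S v w = (1 / 2 : K) • (φ v • w + φ w • v) := by
  have hex : ∀ v, ∃ a : K, S v v = a • v ∧ (v = 0 → a = 0) := by
    intro v
    rcases eq_or_ne v 0 with rfl | hv
    · exact ⟨0, by simp, fun _ => rfl⟩
    · obtain ⟨a, ha⟩ := mem_span_singleton.mp (h v)
      exact ⟨a, ha.symm, fun h => absurd h hv⟩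
  choose c hc hc0 using hex
  have hsmul := coeff_smul_of_coeff_zero hc (hc0 0 rfl)
  have hpair : ∀ v w, c (v + w) = c v + c w ∧ (2 : K) • S v w = c w • v + c v • w := by
    intro v w
    rcases eq_or_ne v 0 with rfl | hv
    · simp [hc0 0 rfl]
    by_cases hvw : LinearIndependent K ![v, w]
    · exact coeff_add_and_two_smul_eq_of_linearIndependent hS hc hvw
    obtain ⟨a, rfl⟩ : ∃ a : K, a • v = w := by
      simpa [LinearIndependent.pair_iff' hv] using hvw
    refine ⟨by rw [show v + a • v = (1 + a) • v by module, hsmul, hsmul]; ring, ?_⟩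
    rw [map_smul, hc, hsmul]
    module
  refine ⟨{ toFun := c, map_add' := fun v w => (hpair v w).1, map_smul' := hsmul }, ?_⟩
  intro v w
  linear_combination (norm := module) (1 / 2 : K) • (hpair v w).2

lemma trace_apply_eq_of_eq_smul_add_smul [Module.Free K E] [Module.Finite K E]
    (φ : E →ₗ[K] K) (h : ∀ v w, S v w = (1 / 2 : K) • (φ v • w + φ w • v)) (v : E) :
    LinearMap.trace K E (S v) = (finrank K E + 1) / 2 * φ v := by
  have hSv : S v = (1 / 2 : K) • (φ v • LinearMap.id + φ.smulRight v) := by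
    ext w; simp [h]
  rw [hSv]
  simp only [one_div, smul_add, map_add, map_smul, LinearMap.trace_id, smul_eq_mul,
    LinearMap.trace_smulRight]
  ring

end Algebra

section Smooth

variable {𝕜 E F : Type*} [NontriviallyNormedField 𝕜] [CompleteSpace 𝕜]
  [NormedAddCommGroup E] [NormedSpace 𝕜 E] [FiniteDimensional 𝕜 E]

variable (𝕜 E) in
noncomputable def partialTrace : (E →L[𝕜] E →L[𝕜] E) →L[𝕜] E →L[𝕜] 𝕜 :=
  ContinuousLinearMap.compL 𝕜 E (E →L[𝕜] E) 𝕜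
    (LinearMap.toContinuousLinearMap (LinearMap.trace 𝕜 E ∘ₗ ContinuousLinearMap.coeLM 𝕜))

@[simp]
lemma partialTrace_apply (T : E →L[𝕜] E →L[𝕜] E) (v : E) :
    partialTrace 𝕜 E T v = LinearMap.trace 𝕜 E (T v) := rfl

theorem exists_contDiffOn_eq_of_forall_mem_span_singleton [CharZero 𝕜]
    [NormedAddCommGroup F] [NormedSpace 𝕜 F] {k : WithTop ℕ∞} {U : Set F}
    {S : F → E →L[𝕜] E →L[𝕜] E} (hS : ContDiffOn 𝕜 k S U)
    (hsym : ∀ x ∈ U, ∀ v w, S x v w = S x w v) (h : ∀ x ∈ U, ∀ v, S x v v ∈ 𝕜 ∙ v) :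
    ∃ α : F → E →L[𝕜] 𝕜, ContDiffOn 𝕜 k α U ∧
      ∀ x ∈ U, ∀ v w, S x v w = (1 / 2 : 𝕜) • (α x v • w + α x w • v) := by
  refine ⟨fun x => (2 / (finrank 𝕜 E + 1) : 𝕜) • partialTrace 𝕜 E (S x),
    ((partialTrace 𝕜 E).contDiff.comp_contDiffOn hS).const_smul _, fun x hx v w => ?_⟩
  obtain ⟨φ, hφ⟩ := exists_linearMap_eq_of_forall_mem_span_singleton
    (S := ContinuousLinearMap.coeLM 𝕜 ∘ₗ (S x : E →ₗ[𝕜] E →L[𝕜] E)) (hsym x hx) (h x hx)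
  have hα : ∀ u, (2 / (finrank 𝕜 E + 1) : 𝕜) * LinearMap.trace 𝕜 E (S x u) = φ u := by
    intro u
    have htr : LinearMap.trace 𝕜 E (S x u) = (finrank 𝕜 E + 1) / 2 * φ u :=
      trace_apply_eq_of_eq_smul_add_smul φ hφ u
    rw [htr]
    field_simp
  simp only [FunLike.coe_smul, Pi.smul_apply, partialTrace_apply, smul_eq_mul, hα]
  exact hφ v w

end Smooth

theorem deriv_deriv_comp {𝕜 E : Type*} [NontriviallyNormedField 𝕜] [NormedAddCommGroup E]
    [NormedSpace 𝕜 E] {γ : 𝕜 → E} {ρ : 𝕜 → 𝕜} {t : 𝕜}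
    (hγ : ContDiffAt 𝕜 2 γ (ρ t)) (hρ : ContDiffAt 𝕜 2 ρ t) :
    deriv (deriv fun s => γ (ρ s)) t =
      deriv ρ t ^ 2 • deriv (deriv γ) (ρ t) + deriv (deriv ρ) t • deriv γ (ρ t) := by
  have hderiv : deriv (fun s => γ (ρ s)) =ᶠ[𝓝 t] fun s => deriv ρ s • deriv γ (ρ s) := by
    filter_upwards [hρ.continuousAt.eventually (hγ.eventually (by simp)), hρ.eventually (by simp)]
      with s hγs hρs
    exact deriv.scomp s (hγs.differentiableAt two_ne_zero) (hρs.differentiableAt two_ne_zero)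
  have hγ' : HasDerivAt (deriv γ) (deriv (deriv γ) (ρ t)) (ρ t) :=
    ((hγ.derivWithin (m := 1) le_rfl).differentiableAt one_ne_zero).hasDerivAt
  have hρ' : HasDerivAt (deriv ρ) (deriv (deriv ρ) t) t :=
    ((hρ.derivWithin (m := 1) le_rfl).differentiableAt one_ne_zero).hasDerivAt
  rw [hderiv.deriv_eq]
  exact (hρ'.smul (hγ'.scomp t (hρ.differentiableAt two_ne_zero).hasDerivAt)).deriv.trans
    (by rw [Function.comp_apply]; module)

section Geodesic

variable {n : ℕ} {Γ Γhat : Christoffel n} {U : Set (Vec n)}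

lemma isGeodesic_of_hasDerivAt {I : Set ℝ} (hI : IsOpen I) (hΓ : ContinuousOn Γ U)
    {γ p : ℝ → Vec n} (hγU : MapsTo γ I U) (hγ : ∀ t ∈ I, HasDerivAt γ (p t) t)
    (hp : ∀ t ∈ I, HasDerivAt p (-Γ (γ t) (p t) (p t)) t) : IsGeodesic Γ U I γ := by
  have hγp : EqOn (deriv γ) p I := fun t ht => (hγ t ht).deriv
  have hpC1 : ContDiffOn ℝ 1 p I := by
    rw [show (1 : WithTop ℕ∞) = 0 + 1 from rfl, contDiffOn_succ_iff_deriv_of_isOpen hI,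
      contDiffOn_zero]
    refine ⟨fun t ht => (hp t ht).differentiableAt.differentiableWithinAt, by simp, ?_⟩
    have hγc : ContinuousOn γ I := fun t ht => (hγ t ht).continuousAt.continuousWithinAt
    have hpc : ContinuousOn p I := fun t ht => (hp t ht).continuousAt.continuousWithinAt
    exact (((hΓ.comp hγc hγU).clm_apply hpc).clm_apply hpc).neg.congr fun t ht => (hp t ht).deriv
  refine ⟨hγU, ?_, fun t ht => ?_⟩
  · rw [show ((2 : ℕ∞) : WithTop ℕ∞) = 1 + 1 from rfl, contDiffOn_succ_iff_deriv_of_isOpen hI]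
    exact ⟨fun t ht => (hγ t ht).differentiableAt.differentiableWithinAt, by simp,
      hpC1.congr hγp⟩
  · rw [(eventuallyEq_of_mem (hI.mem_nhds ht) hγp).deriv_eq, (hp t ht).deriv, hγp ht]

theorem exists_isGeodesic (hU : IsOpen U) (hΓ : ContDiffOn ℝ 1 Γ U) {x : Vec n} (hx : x ∈ U)
    (v : Vec n) :
    ∃ ε > 0, ∃ γ : ℝ → Vec n, IsGeodesic Γ U (Ioo (-ε) ε) γ ∧ γ 0 = x ∧ deriv γ 0 = v := by
  have hF : ContDiffAt ℝ 1 (fun y : Vec n × Vec n => (y.2, -Γ y.1 y.2 y.2)) (x, v) :=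
    contDiffAt_snd.prodMk
      (((hΓ.contDiffAt (hU.mem_nhds hx)).comp (x, v) contDiffAt_fst |>.clm_apply
        contDiffAt_snd).clm_apply contDiffAt_snd).neg
  obtain ⟨f, hf0, ε, hε, hf⟩ :=
    hF.exists_forall_mem_closedBall_exists_eq_forall_mem_Ioo_hasDerivAt₀ 0
  have hfc : ContinuousAt f 0 := (hf 0 (by simpa using hε)).continuousAt
  have hnear : ∀ᶠ t in 𝓝 (0 : ℝ), t ∈ Ioo (0 - ε) (0 + ε) ∧ (f t).1 ∈ U :=
    (show ∀ᶠ t in 𝓝 (0 : ℝ), t ∈ Ioo (0 - ε) (0 + ε) from Ioo_mem_nhds (by linarith)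
      (by linarith)).and
      (hfc.fst.eventually_mem (by simpa [hf0] using hU.mem_nhds hx))
  obtain ⟨δ, hδ, hδε⟩ := Metric.eventually_nhds_iff_ball.mp hnear
  rw [Real.ball_zero_eq_Ioo] at hδε
  have h0 : (0 : ℝ) ∈ Ioo (-δ) δ := by simpa using hδ
  have hfst : ∀ t ∈ Ioo (-δ) δ, HasDerivAt (fun t => (f t).1) (f t).2 t := fun t ht =>
    ((ContinuousLinearMap.fst ℝ _ _).hasFDerivAt.comp_hasDerivAt t (hf t (hδε t ht).1) :)
  have hsnd : ∀ t ∈ Ioo (-δ) δ, HasDerivAt (fun t => (f t).2) (-Γ (f t).1 (f t).2 (f t).2) t :=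
    fun t ht =>
      ((ContinuousLinearMap.snd ℝ _ _).hasFDerivAt.comp_hasDerivAt t (hf t (hδε t ht).1) :)
  exact ⟨δ, hδ, _, isGeodesic_of_hasDerivAt isOpen_Ioo hΓ.continuousOn (fun t ht => (hδε t ht).2)
    hfst hsnd, by simp [hf0], by simp [(hfst 0 h0).deriv, hf0]⟩

theorem sub_apply_self_mem_span_of_reparam (hU : IsOpen U) (hΓ : ContDiffOn ℝ 1 Γ U)
    {x : Vec n} (hx : x ∈ U) {v : Vec n} {ρ : ℝ → ℝ} (hρ : ContDiffAt ℝ 2 ρ 0) (hρ0 : ρ 0 = 0)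
    (hρ1 : deriv ρ 0 = 1)
    (hrep : ∀ I : Set ℝ, IsOpen I → I.OrdConnected → (0 : ℝ) ∈ I → ∀ γ : ℝ → Vec n,
      IsGeodesic Γ U I γ → γ 0 = x → deriv γ 0 = v → (∀ᶠ s in 𝓝 0, ρ s ∈ I) →
        deriv (deriv fun s => γ (ρ s)) 0 =
          -Γhat (γ (ρ 0)) (deriv (fun s => γ (ρ s)) 0) (deriv (fun s => γ (ρ s)) 0)) :
    Γ x v v - Γhat x v v ∈ ℝ ∙ v := by
  obtain ⟨ε, hε, γ, hγ, hγ0, hγ'0⟩ := exists_isGeodesic hU hΓ hx v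
  have h0 : (0 : ℝ) ∈ Ioo (-ε) ε := by simpa using hε
  have hI : Ioo (-ε) ε ∈ 𝓝 (ρ 0) := by rw [hρ0]; exact isOpen_Ioo.mem_nhds h0
  have hγ2 : ContDiffAt ℝ 2 γ (ρ 0) := hγ.2.1.contDiffAt hI
  have hρI : ∀ᶠ s in 𝓝 0, ρ s ∈ Ioo (-ε) ε := hρ.continuousAt.eventually_mem hI
  have hfirst : deriv (fun s => γ (ρ s)) 0 = v := by
    rw [show (fun s => γ (ρ s)) = γ ∘ ρ from rfl,
      deriv.scomp 0 (hγ2.differentiableAt two_ne_zero) (hρ.differentiableAt two_ne_zero),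
      hρ1, hρ0, hγ'0, one_smul]
  have h := hrep _ isOpen_Ioo ordConnected_Ioo h0 γ hγ hγ0 hγ'0 hρI
  rw [deriv_deriv_comp hγ2 hρ, hfirst, hρ0, hρ1, hγ.2.2 0 h0, hγ0, hγ'0] at h
  exact mem_span_singleton.mpr ⟨deriv (deriv ρ) 0, by linear_combination (norm := module) h⟩

end Geodesic

theorem stmt0_general {n : ℕ} (U : Set (Vec n)) (hU : IsOpen U)
    (Γ Γhat : Christoffel n)
    (hΓ : ContDiffOn ℝ (⊤ : ℕ∞) Γ U) (hΓhat : ContDiffOn ℝ (⊤ : ℕ∞) Γhat U)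
    (hΓsym : ∀ x ∈ U, ∀ v w : Vec n, Γ x v w = Γ x w v)
    (hΓhatsym : ∀ x ∈ U, ∀ v w : Vec n, Γhat x v w = Γhat x w v)
    (W : Set (ℝ × Vec n × Vec n)) (hWopen : IsOpen W)
    (hW0 : ∀ x ∈ U, ∀ v : Vec n, ((0 : ℝ), x, v) ∈ W)
    (r : ℝ × Vec n × Vec n → ℝ) (hr : ContDiffOn ℝ (⊤ : ℕ∞) r W)
    (hr0 : ∀ x ∈ U, ∀ v : Vec n, r (0, x, v) = 0)
    (hr1 : ∀ x ∈ U, ∀ v : Vec n, deriv (fun t => r (t, x, v)) 0 = 1)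
    (hrepar : ∀ x ∈ U, ∀ v : Vec n, ∀ I : Set ℝ, IsOpen I → I.OrdConnected →
      (0 : ℝ) ∈ I → ∀ γ : ℝ → Vec n, IsGeodesic Γ U I γ → γ 0 = x →
      deriv γ 0 = v →
      ∀ t : ℝ, (t, x, v) ∈ W → (∀ᶠ s in nhds t, r (s, x, v) ∈ I) →
        deriv (deriv (fun s => γ (r (s, x, v)))) t =
          -(Γhat (γ (r (t, x, v)))
              (deriv (fun s => γ (r (s, x, v))) t)
              (deriv (fun s => γ (r (s, x, v))) t))) :
    ∃ α : Vec n → (Vec n →L[ℝ] ℝ), ContDiffOn ℝ (⊤ : ℕ∞) α U ∧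
      ∀ x ∈ U, ∀ v w : Vec n,
        Γ x v w - Γhat x v w = (1/2 : ℝ) • (α x v • w + α x w • v) := by
  have hdiag : ∀ x ∈ U, ∀ v, (Γ x - Γhat x) v v ∈ ℝ ∙ v := by
    intro x hx v
    have hρ : ContDiffAt ℝ 2 (fun s => r (s, x, v)) 0 :=
      ((hr.contDiffAt (hWopen.mem_nhds (hW0 x hx v))).comp 0
        (contDiffAt_id.prodMk contDiffAt_const)).of_le (WithTop.coe_le_coe.mpr le_top)
    exact sub_apply_self_mem_span_of_reparam hU (hΓ.of_le (WithTop.coe_le_coe.mpr le_top)) hx hρ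
      (hr0 x hx v) (hr1 x hx v) fun I hI hIc h0 γ hγ hγ0 hγ'0 hρI =>
        hrepar x hx v I hI hIc h0 γ hγ hγ0 hγ'0 0 (hW0 x hx v) hρI
  obtain ⟨α, hα, hS⟩ := exists_contDiffOn_eq_of_forall_mem_span_singleton (hΓ.sub hΓhat)
    (fun x hx v w => by simp [hΓsym x hx v w, hΓhatsym x hx v w]) hdiag
  exact ⟨α, hα, hS⟩

theorem stmt0 {n : ℕ} (hn : 1 ≤ n) (U : Set (Vec n)) (hU : IsOpen U)
    (Γ Γhat : Christoffel n)
    (hΓ : ContDiffOn ℝ (⊤ : ℕ∞) Γ U) (hΓhat : ContDiffOn ℝ (⊤ : ℕ∞) Γhat U)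
    (hΓsym : ∀ x ∈ U, ∀ v w : Vec n, Γ x v w = Γ x w v)
    (hΓhatsym : ∀ x ∈ U, ∀ v w : Vec n, Γhat x v w = Γhat x w v)
    (W : Set (ℝ × Vec n × Vec n)) (hWopen : IsOpen W)
    (hWsub : ∀ q ∈ W, q.2.1 ∈ U)
    (hW0 : ∀ x ∈ U, ∀ v : Vec n, ((0 : ℝ), x, v) ∈ W)
    (r : ℝ × Vec n × Vec n → ℝ) (hr : ContDiffOn ℝ (⊤ : ℕ∞) r W)
    (hr0 : ∀ x ∈ U, ∀ v : Vec n, r (0, x, v) = 0)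
    (hr1 : ∀ x ∈ U, ∀ v : Vec n, deriv (fun t => r (t, x, v)) 0 = 1)
    (hrepar : ∀ x ∈ U, ∀ v : Vec n, ∀ I : Set ℝ, IsOpen I → I.OrdConnected →
      (0 : ℝ) ∈ I → ∀ γ : ℝ → Vec n, IsGeodesic Γ U I γ → γ 0 = x →
      deriv γ 0 = v →
      ∀ t : ℝ, (t, x, v) ∈ W → (∀ᶠ s in nhds t, r (s, x, v) ∈ I) →
        deriv (deriv (fun s => γ (r (s, x, v)))) t =
          -(Γhat (γ (r (t, x, v)))
              (deriv (fun s => γ (r (s, x, v))) t)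
              (deriv (fun s => γ (r (s, x, v))) t))) :
    ∃ α : Vec n → (Vec n →L[ℝ] ℝ), ContDiffOn ℝ (⊤ : ℕ∞) α U ∧
      ∀ x ∈ U, ∀ v w : Vec n,
        Γ x v w - Γhat x v w = (1/2 : ℝ) • (α x v • w + α x w • v) :=
  stmt0_general U hU Γ Γhat hΓ hΓhat hΓsym hΓhatsym W hWopen hW0 r hr hr0 hr1 hrepar
end

section
/- Let U ⊆ ℝⁿ be open and let Γ and Γ̂ be symmetric Christoffel fields on U with difference tensor S. Assume there is a smooth map α : U → (ℝⁿ)* such that S(x)(v,w) = (1/2)·(α(x)(v)·w + α(x)(w)·v) for all x ∈ U and v,w ∈ ℝⁿ. Then for every Γ-geodesic γ : I → U with 0 ∈ I there exist ε > 0 and a smooth function r : (-ε,ε) → ℝ with r(0) = 0, r'(0) = 1 and r((-ε,ε)) ⊆ I, such that t ↦ γ(r(t)) is a Γ̂-geodesic on (-ε,ε). -/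
open Set

/-!
A `Γ`-geodesic is smooth since `Γ` is. If `r` is a reparametrization, then
`(γ ∘ r)'' = r'' γ'(r) - r'² Γ(γ'(r), γ'(r))`, while `Γ̂(v, v) = Γ(v, v) - α(v) v`.
Hence `γ ∘ r` is a `Γ̂`-geodesic as soon as `r'' = φ(r) r'²` with `φ(s) = α(γ s)(γ' s)`.
This ODE is solved explicitly: with `F' = φ` and `G' = exp (-F)`, take `r = G⁻¹`,
so that `r' = exp (F ∘ r)` and `r'' = φ(r) r'²`.
-/

theorem exists_contDiffOn_antiderivative {E : Type*} [NormedAddCommGroup E] [NormedSpace ℝ E]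
    [CompleteSpace E] {φ : ℝ → E} {I : Set ℝ} (hIopen : IsOpen I) (hIconn : I.OrdConnected)
    {a : ℝ} (ha : a ∈ I) (hφ : ContDiffOn ℝ (⊤ : ℕ∞) φ I) :
    ∃ F : ℝ → E, F a = 0 ∧ (∀ s ∈ I, HasDerivAt F (φ s) s) ∧ ContDiffOn ℝ (⊤ : ℕ∞) F I := by
  have hF : ∀ s ∈ I, HasDerivAt (fun u => ∫ x in a..u, φ x) (φ s) s := fun s hs =>
    intervalIntegral.integral_hasDerivAt_right
      ((hφ.continuousOn.mono (hIconn.uIcc_subset ha hs)).intervalIntegrable)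
      (hφ.continuousOn.stronglyMeasurableAtFilter hIopen s hs)
      (hφ.continuousOn.continuousAt (hIopen.mem_nhds hs))
  refine ⟨_, intervalIntegral.integral_same, hF, ?_⟩
  rw [contDiffOn_infty_iff_deriv_of_isOpen hIopen]
  exact ⟨fun s hs => (hF s hs).differentiableAt.differentiableWithinAt,
    hφ.congr fun s hs => (hF s hs).deriv⟩

theorem exists_contDiffOn_local_inverse {G h : ℝ → ℝ} {I : Set ℝ} (hIopen : IsOpen I)
    {a : ℝ} (ha : a ∈ I) (hG : ∀ s ∈ I, HasDerivAt G (h s) s)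
    (hGsmooth : ContDiffOn ℝ (⊤ : ℕ∞) G I) (hh : ∀ s ∈ I, h s ≠ 0) :
    ∃ ε > (0 : ℝ), ∃ r : ℝ → ℝ, r (G a) = a ∧ MapsTo r (Metric.ball (G a) ε) I ∧
      ContDiffOn ℝ (⊤ : ℕ∞) r (Metric.ball (G a) ε) ∧
      ∀ t ∈ Metric.ball (G a) ε, HasDerivAt r (h (r t))⁻¹ t := by
  have hGa : ContDiffAt ℝ (⊤ : ℕ∞) G a := hGsmooth.contDiffAt (hIopen.mem_nhds ha)
  have hstrict : HasStrictDerivAt G (h a) a := by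
    simpa [(hG a ha).deriv] using hGa.hasStrictDerivAt (by simp)
  set Φ := (hstrict.hasStrictFDerivAt_equiv (hh a ha)).toOpenPartialHomeomorph G
  have hΦ : ⇑Φ = G := HasStrictFDerivAt.toOpenPartialHomeomorph_coe _
  have haΦ : a ∈ Φ.source := HasStrictFDerivAt.mem_toOpenPartialHomeomorph_source _
  have hGaΦ : G a ∈ Φ.target := hΦ ▸ Φ.map_source haΦ
  have hW : IsOpen (Φ.target ∩ Φ.symm ⁻¹' I) :=
    Φ.continuousOn_symm.isOpen_inter_preimage Φ.open_target hIopen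
  have hsymm : Φ.symm (G a) = a := by simpa [hΦ] using Φ.left_inv haΦ
  obtain ⟨ε, hε, hball⟩ := Metric.isOpen_iff.1 hW (G a) ⟨hGaΦ, by simpa [hsymm] using ha⟩
  have hderiv : ∀ t ∈ Metric.ball (G a) ε, HasDerivAt G (h (Φ.symm t)) (Φ.symm t) :=
    fun t ht => hG _ (hball ht).2
  refine ⟨ε, hε, Φ.symm, hsymm, fun t ht => (hball ht).2, fun t ht => ?_, fun t ht => ?_⟩
  · refine (Φ.contDiffAt_symm_deriv (hh _ (hball ht).2) (hball ht).1 (hΦ ▸ hderiv t ht)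
      ?_).contDiffWithinAt
    rw [hΦ]
    exact hGsmooth.contDiffAt (hIopen.mem_nhds (hball ht).2)
  · exact Φ.hasDerivAt_symm (hball ht).1 (hh _ (hball ht).2) (hΦ ▸ hderiv t ht)

theorem exists_local_solution_deriv_deriv_eq_mul_sq {φ : ℝ → ℝ} {I : Set ℝ}
    (hIopen : IsOpen I) (hIconn : I.OrdConnected) (hI0 : (0 : ℝ) ∈ I)
    (hφ : ContDiffOn ℝ (⊤ : ℕ∞) φ I) :
    ∃ ε > (0 : ℝ), ∃ r ρ : ℝ → ℝ, ContDiffOn ℝ (⊤ : ℕ∞) r (Ioo (-ε) ε) ∧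
      r 0 = 0 ∧ ρ 0 = 1 ∧ MapsTo r (Ioo (-ε) ε) I ∧
      ∀ t ∈ Ioo (-ε) ε, HasDerivAt r (ρ t) t ∧ HasDerivAt ρ (φ (r t) * ρ t ^ 2) t := by
  obtain ⟨F, hF0, hF, hFsmooth⟩ := exists_contDiffOn_antiderivative hIopen hIconn hI0 hφ
  obtain ⟨G, hG0, hG, hGsmooth⟩ :=
    exists_contDiffOn_antiderivative hIopen hIconn hI0 hFsmooth.neg.exp
  obtain ⟨ε, hε, r, hr0, hrI, hrsmooth, hr⟩ :=
    exists_contDiffOn_local_inverse hIopen hI0 hG hGsmooth fun s _ => (Real.exp_pos _).ne'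
  rw [hG0] at hr0 hrI hrsmooth hr
  rw [Real.ball_zero_eq_Ioo] at hrI hrsmooth hr
  have hr' : ∀ t ∈ Ioo (-ε) ε, HasDerivAt r (Real.exp (F (r t))) t := fun t ht => by
    simpa [Real.exp_neg] using hr t ht
  refine ⟨ε, hε, r, fun t => Real.exp (F (r t)), hrsmooth, hr0, by simp [hr0, hF0], hrI,
    fun t ht => ⟨hr' t ht, ?_⟩⟩
  refine ((hF _ (hrI ht)).comp t (hr' t ht)).exp.congr_deriv ?_
  simp only [Function.comp_apply]
  ring

theorem IsGeodesic.contDiffOn {n : ℕ} {Γ : Christoffel n} {U : Set (Vec n)} {I : Set ℝ}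
    {γ : ℝ → Vec n} (hγ : IsGeodesic Γ U I γ) (hI : IsOpen I)
    (hΓ : ContDiffOn ℝ (⊤ : ℕ∞) Γ U) : ContDiffOn ℝ (⊤ : ℕ∞) γ I := by
  obtain ⟨hmap, hγ2, hgeo⟩ := hγ
  have hγ'1 : ContDiffOn ℝ 1 (deriv γ) I := hγ2.deriv_of_isOpen hI (by norm_num)
  have hγ' : ∀ k : ℕ, ContDiffOn ℝ k (deriv γ) I := by
    intro k
    induction k with
    | zero => exact hγ'1.of_le (by norm_num)
    | succ k ih =>
      have hγk : ContDiffOn ℝ k γ I := by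
        refine ((contDiffOn_succ_iff_deriv_of_isOpen hI).2
          ⟨hγ2.differentiableOn (by norm_num), by simp, ih⟩).of_le ?_
        exact_mod_cast k.le_succ
      have hΓγ : ContDiffOn ℝ k (fun t => Γ (γ t)) I :=
        (hΓ.of_le (by exact_mod_cast le_top)).comp hγk hmap
      have hγ'' : ContDiffOn ℝ k (deriv (deriv γ)) I :=
        ((hΓγ.clm_apply ih).clm_apply ih).neg.congr hgeo
      exact (contDiffOn_succ_iff_deriv_of_isOpen hI).2
        ⟨hγ'1.differentiableOn one_ne_zero, by simp, hγ''⟩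
  exact (contDiffOn_infty_iff_deriv_of_isOpen hI).2
    ⟨hγ2.differentiableOn (by norm_num), contDiffOn_infty.2 hγ'⟩

theorem IsGeodesic.comp_of_hasDerivAt {n : ℕ} {Γ Γhat : Christoffel n} {U : Set (Vec n)}
    {α : Vec n → (Vec n →L[ℝ] ℝ)} (hS : ∀ x ∈ U, ∀ v, Γ x v v - Γhat x v v = α x v • v)
    {I J : Set ℝ} (hI : IsOpen I) (hJ : IsOpen J) {γ : ℝ → Vec n} (hγ : IsGeodesic Γ U I γ)
    {r ρ : ℝ → ℝ} (hr : ContDiffOn ℝ (2 : ℕ∞) r J) (hrJ : MapsTo r J I)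
    (hρ : ∀ t ∈ J, HasDerivAt r (ρ t) t ∧
      HasDerivAt ρ (α (γ (r t)) (deriv γ (r t)) * ρ t ^ 2) t) :
    IsGeodesic Γhat U J (fun t => γ (r t)) := by
  obtain ⟨hmap, hγ2, hgeo⟩ := hγ
  have hγ'1 : ContDiffOn ℝ 1 (deriv γ) I := hγ2.deriv_of_isOpen hI (by norm_num)
  have hγ' : ∀ s ∈ I, HasDerivAt γ (deriv γ s) s := fun s hs =>
    ((hγ2.differentiableOn (by norm_num)).differentiableAt (hI.mem_nhds hs)).hasDerivAt
  have hγ'' : ∀ s ∈ I, HasDerivAt (deriv γ) (deriv (deriv γ) s) s := fun s hs =>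
    ((hγ'1.differentiableOn one_ne_zero).differentiableAt (hI.mem_nhds hs)).hasDerivAt
  have hderiv : ∀ t ∈ J, deriv (fun u => γ (r u)) t = ρ t • deriv γ (r t) := fun t ht =>
    ((hγ' _ (hrJ ht)).scomp t (hρ t ht).1).deriv
  refine ⟨hmap.comp hrJ, hγ2.comp hr hrJ, fun t ht => ?_⟩
  have hsecond : HasDerivAt (fun u => ρ u • deriv γ (r u))
      (ρ t • ρ t • deriv (deriv γ) (r t) + (α (γ (r t)) (deriv γ (r t)) * ρ t ^ 2) •
        deriv γ (r t)) t :=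
    (hρ t ht).2.smul ((hγ'' _ (hrJ ht)).scomp t (hρ t ht).1)
  rw [(Filter.eventuallyEq_of_mem (hJ.mem_nhds ht) hderiv).deriv_eq, hsecond.deriv,
    hderiv t ht, hgeo _ (hrJ ht)]
  beta_reduce
  set x := γ (r t)
  set v := deriv γ (r t)
  have hhat : Γhat x v v = Γ x v v - α x v • v := by
    rw [← hS x (hmap (hrJ ht)) v]
    abel
  simp only [map_smul, FunLike.coe_smul, Pi.smul_apply, hhat]
  module

theorem stmt1_general {n : ℕ} (U : Set (Vec n))
    (Γ Γhat : Christoffel n)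
    (hΓ : ContDiffOn ℝ (⊤ : ℕ∞) Γ U)
    (α : Vec n → (Vec n →L[ℝ] ℝ)) (hα : ContDiffOn ℝ (⊤ : ℕ∞) α U)
    (hS : ∀ x ∈ U, ∀ v w : Vec n,
      Γ x v w - Γhat x v w = (1/2 : ℝ) • (α x v • w + α x w • v))
    (I : Set ℝ) (hIopen : IsOpen I) (hIconn : I.OrdConnected) (hI0 : (0 : ℝ) ∈ I)
    (γ : ℝ → Vec n) (hγ : IsGeodesic Γ U I γ) :
    ∃ ε > (0 : ℝ), ∃ r : ℝ → ℝ,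
      ContDiffOn ℝ (⊤ : ℕ∞) r (Ioo (-ε) ε) ∧
      r 0 = 0 ∧ deriv r 0 = 1 ∧ Set.MapsTo r (Ioo (-ε) ε) I ∧
      IsGeodesic Γhat U (Ioo (-ε) ε) (fun t => γ (r t)) := by
  have hγsmooth : ContDiffOn ℝ (⊤ : ℕ∞) γ I := hγ.contDiffOn hIopen hΓ
  have hφ : ContDiffOn ℝ (⊤ : ℕ∞) (fun s => α (γ s) (deriv γ s)) I :=
    (hα.comp hγsmooth hγ.1).clm_apply (hγsmooth.deriv_of_isOpen hIopen le_rfl)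
  obtain ⟨ε, hε, r, ρ, hr, hr0, hρ0, hrI, hode⟩ :=
    exists_local_solution_deriv_deriv_eq_mul_sq hIopen hIconn hI0 hφ
  have hdiag : ∀ x ∈ U, ∀ v, Γ x v v - Γhat x v v = α x v • v := fun x hx v => by
    rw [hS x hx v v]
    module
  refine ⟨ε, hε, r, hr, hr0, ?_, hrI,
    hγ.comp_of_hasDerivAt hdiag hIopen isOpen_Ioo (hr.of_le (by exact_mod_cast le_top)) hrI hode⟩
  rw [(hode 0 ⟨neg_lt_zero.2 hε, hε⟩).1.deriv, hρ0]

theorem stmt1 {n : ℕ} (U : Set (Vec n)) (hU : IsOpen U)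
    (Γ Γhat : Christoffel n)
    (hΓ : ContDiffOn ℝ (⊤ : ℕ∞) Γ U) (hΓhat : ContDiffOn ℝ (⊤ : ℕ∞) Γhat U)
    (hΓsym : ∀ x ∈ U, ∀ v w : Vec n, Γ x v w = Γ x w v)
    (hΓhatsym : ∀ x ∈ U, ∀ v w : Vec n, Γhat x v w = Γhat x w v)
    (α : Vec n → (Vec n →L[ℝ] ℝ)) (hα : ContDiffOn ℝ (⊤ : ℕ∞) α U)
    (hS : ∀ x ∈ U, ∀ v w : Vec n,
      Γ x v w - Γhat x v w = (1/2 : ℝ) • (α x v • w + α x w • v))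
    (I : Set ℝ) (hIopen : IsOpen I) (hIconn : I.OrdConnected) (hI0 : (0 : ℝ) ∈ I)
    (γ : ℝ → Vec n) (hγ : IsGeodesic Γ U I γ) :
    ∃ ε > (0 : ℝ), ∃ r : ℝ → ℝ,
      ContDiffOn ℝ (⊤ : ℕ∞) r (Ioo (-ε) ε) ∧
      r 0 = 0 ∧ deriv r 0 = 1 ∧ Set.MapsTo r (Ioo (-ε) ε) I ∧
      IsGeodesic Γhat U (Ioo (-ε) ε) (fun t => γ (r t)) :=
  stmt1_general U Γ Γhat hΓ α hα hS I hIopen hIconn hI0 γ hγ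
end

section
/- Let U ⊆ ℝⁿ be open, let Γ and Γ̂ be Christoffel fields on U with difference tensor S, let γ : I → U be a Γ-geodesic on an open interval I, and let r : J → ℝ be a C² function on an open interval J with r(J) ⊆ I. Then the curve t ↦ γ(r(t)) is a Γ̂-geodesic on J if and only if for all t ∈ J one has r''(t)·γ'(r(t)) = (r'(t))²·S(γ(r(t)))(γ'(r(t)), γ'(r(t))) (an equation of vectors in ℝⁿ). -/
open Set

/-
By the chain rule, `(γ ∘ r)'' = r'' • γ'(r) + r'² • γ''(r)`, and `γ''(r) = -Γ(γ')(γ')` since `γ` is a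
`Γ`-geodesic. By bilinearity `Γ̂((γ ∘ r)')((γ ∘ r)') = r'² • Γ̂(γ')(γ')`, so the `Γ̂`-geodesic
equation for `γ ∘ r` is a linear rearrangement of the stated identity; the other conditions for
being a geodesic (`C²`, values in `U`) pass from `γ` to `γ ∘ r` automatically.
-/

section Reparametrization

variable {E : Type*} [NormedAddCommGroup E] [NormedSpace ℝ E]

theorem ContDiffOn.hasDerivAt_deriv_of_isOpen {f : ℝ → E} {s : Set ℝ} (hf : ContDiffOn ℝ 1 f s)
    (hs : IsOpen s) {x : ℝ} (hx : x ∈ s) : HasDerivAt f (deriv f x) x :=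
  ((hf.differentiableOn one_ne_zero).differentiableAt (hs.mem_nhds hx)).hasDerivAt

theorem ContDiffOn.hasDerivAt_deriv_deriv_of_isOpen {f : ℝ → E} {s : Set ℝ}
    (hf : ContDiffOn ℝ 2 f s) (hs : IsOpen s) {x : ℝ} (hx : x ∈ s) :
    HasDerivAt (deriv f) (deriv (deriv f) x) x := by
  have hf' : ContDiffOn ℝ 1 (deriv f) s := hf.deriv_of_isOpen hs (by norm_num)
  exact hf'.hasDerivAt_deriv_of_isOpen hs hx

variable {f : ℝ → E} {r : ℝ → ℝ} {I J : Set ℝ}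

theorem deriv_comp_of_contDiffOn (hf : ContDiffOn ℝ 1 f I) (hI : IsOpen I)
    (hr : ContDiffOn ℝ 1 r J) (hJ : IsOpen J) (hrJ : MapsTo r J I) {t : ℝ} (ht : t ∈ J) :
    deriv (fun t => f (r t)) t = deriv r t • deriv f (r t) :=
  ((hf.hasDerivAt_deriv_of_isOpen hI (hrJ ht)).scomp t
    (hr.hasDerivAt_deriv_of_isOpen hJ ht)).deriv

theorem deriv_deriv_comp_of_contDiffOn (hf : ContDiffOn ℝ 2 f I) (hI : IsOpen I)
    (hr : ContDiffOn ℝ 2 r J) (hJ : IsOpen J) (hrJ : MapsTo r J I) {t : ℝ} (ht : t ∈ J) :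
    deriv (deriv fun t => f (r t)) t =
      deriv (deriv r) t • deriv f (r t) + deriv r t ^ 2 • deriv (deriv f) (r t) := by
  have hf1 : ContDiffOn ℝ 1 f I := hf.of_le (by norm_num)
  have hr1 : ContDiffOn ℝ 1 r J := hr.of_le (by norm_num)
  have hfirst : deriv (fun t => f (r t)) =ᶠ[nhds t] fun t => deriv r t • deriv f (r t) :=
    Filter.eventuallyEq_of_mem (hJ.mem_nhds ht) fun s hs =>
      deriv_comp_of_contDiffOn hf1 hI hr1 hJ hrJ hs
  have hf'r : HasDerivAt (fun t => deriv f (r t)) (deriv r t • deriv (deriv f) (r t)) t :=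
    (hf.hasDerivAt_deriv_deriv_of_isOpen hI (hrJ ht)).scomp t
      (hr1.hasDerivAt_deriv_of_isOpen hJ ht)
  have hsecond : HasDerivAt (fun t => deriv r t • deriv f (r t))
      (deriv r t • deriv r t • deriv (deriv f) (r t) + deriv (deriv r) t • deriv f (r t)) t :=
    (hr.hasDerivAt_deriv_deriv_of_isOpen hJ ht).smul hf'r
  rw [hfirst.deriv_eq, hsecond.deriv, smul_smul, ← sq, add_comm]

theorem reparam_geodesic_eq_iff (B B' : E →L[ℝ] E →L[ℝ] E) (a b : ℝ) (v : E) :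
    b • v + a ^ 2 • -(B v v) = -(B' (a • v) (a • v)) ↔ b • v = a ^ 2 • (B v v - B' v v) := by
  simp only [map_smul, smul_apply, smul_smul, ← sq, smul_sub]
  constructor <;> intro h <;> linear_combination (norm := module) h

end Reparametrization

theorem stmt2_general {n : ℕ} (U : Set (Vec n))
    (Γ Γhat : Christoffel n)
    (I J : Set ℝ) (hIopen : IsOpen I)
    (hJopen : IsOpen J)
    (γ : ℝ → Vec n) (hγ : IsGeodesic Γ U I γ)
    (r : ℝ → ℝ) (hr : ContDiffOn ℝ (2 : ℕ∞) r J) (hrJ : Set.MapsTo r J I) :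
    IsGeodesic Γhat U J (fun t => γ (r t)) ↔
      ∀ t ∈ J, (deriv (deriv r) t) • deriv γ (r t) =
        (deriv r t) ^ 2 •
          (Γ (γ (r t)) (deriv γ (r t)) (deriv γ (r t)) -
            Γhat (γ (r t)) (deriv γ (r t)) (deriv γ (r t))) := by
  obtain ⟨hγU, hγ2, hγeq⟩ := hγ
  have hγ1 : ContDiffOn ℝ 1 γ I := hγ2.of_le (by norm_num)
  have hr1 : ContDiffOn ℝ 1 r J := hr.of_le (by norm_num)
  have hmaps : MapsTo (fun t => γ (r t)) J U := hγU.comp hrJ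
  have hC2 : ContDiffOn ℝ (2 : ℕ∞) (fun t => γ (r t)) J := hγ2.comp hr hrJ
  rw [IsGeodesic, and_iff_right hmaps, and_iff_right hC2]
  refine forall₂_congr fun t ht => ?_
  rw [deriv_deriv_comp_of_contDiffOn hγ2 hIopen hr hJopen hrJ ht,
    deriv_comp_of_contDiffOn hγ1 hIopen hr1 hJopen hrJ ht, hγeq _ (hrJ ht)]
  exact reparam_geodesic_eq_iff _ _ _ _ _

theorem stmt2 {n : ℕ} (U : Set (Vec n)) (hU : IsOpen U)
    (Γ Γhat : Christoffel n)
    (hΓ : ContDiffOn ℝ (⊤ : ℕ∞) Γ U) (hΓhat : ContDiffOn ℝ (⊤ : ℕ∞) Γhat U)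
    (I J : Set ℝ) (hIopen : IsOpen I) (hIconn : I.OrdConnected)
    (hJopen : IsOpen J) (hJconn : J.OrdConnected)
    (γ : ℝ → Vec n) (hγ : IsGeodesic Γ U I γ)
    (r : ℝ → ℝ) (hr : ContDiffOn ℝ (2 : ℕ∞) r J) (hrJ : Set.MapsTo r J I) :
    IsGeodesic Γhat U J (fun t => γ (r t)) ↔
      ∀ t ∈ J, (deriv (deriv r) t) • deriv γ (r t) =
        (deriv r t) ^ 2 •
          (Γ (γ (r t)) (deriv γ (r t)) (deriv γ (r t)) -
            Γhat (γ (r t)) (deriv γ (r t)) (deriv γ (r t))) :=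
  stmt2_general U Γ Γhat I J hIopen hJopen γ hγ r hr hrJ
end

section
/- Let U ⊆ ℝⁿ be open, let Γ and Γ̂ be Christoffel fields on U with difference tensor S, and let γ : I → U be a Γ-geodesic on an open interval I ∋ 0 with γ(0) = x and γ'(0) = v. Let r : J → ℝ be a C² function on an open interval J ∋ 0 with r(0) = 0, r'(0) = 1, r(J) ⊆ I, and satisfying r''(t)·γ'(r(t)) = (r'(t))²·S(γ(r(t)))(γ'(r(t)), γ'(r(t))) for all t ∈ J. If δ : K → U is any Γ̂-geodesic on an open interval K ∋ 0 with δ(0) = x and δ'(0) = v, then δ(t) = γ(r(t)) for all t ∈ J ∩ K. -/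
open Set Topology Filter

/-!
A `Γ̂`-geodesic `δ` lifts to the solution `t ↦ (δ t, δ' t)` of the first-order system
`(x, v)' = (v, -Γ̂(x)(v, v))`. The reparametrization equation for `r` is exactly what makes
`t ↦ (γ (r t), r' t • γ' (r t))` a solution of the same system: the derivative of its second
component, `r'' γ'(r) - r'² Γ(γ(r))(γ'(r), γ'(r))`, equals
`-Γ̂(γ(r))(r' γ'(r), r' γ'(r))`.
Both lifts start at `(x, v)`, and since the geodesic vector field is `C¹`, hence locally
Lipschitz, they agree on the connected interval `J ∩ K` by uniqueness of solutions.
-/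

section RealVariable

variable {E : Type*} [NormedAddCommGroup E] [NormedSpace ℝ E]

theorem ODE_solution_unique_of_isPreconnected {F : E → E} {u w : ℝ → E} {W : Set ℝ}
    (hWo : IsOpen W) (hWc : IsPreconnected W)
    (hF : ∀ t ∈ W, ∃ K, ∃ s ∈ 𝓝 (u t), LipschitzOnWith K F s)
    (hu : ∀ t ∈ W, HasDerivAt u (F (u t)) t) (hw : ∀ t ∈ W, HasDerivAt w (F (w t)) t)
    {t₀ : ℝ} (ht₀ : t₀ ∈ W) (heq : u t₀ = w t₀) :
    EqOn u w W := by
  have local_unique : ∀ t ∈ W, u t = w t → u =ᶠ[𝓝 t] w := by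
    intro t ht hteq
    obtain ⟨K, s, hs, hlip⟩ := hF t ht
    have hW : ∀ᶠ τ in 𝓝 t, τ ∈ W := hWo.mem_nhds ht
    have hus : ∀ᶠ τ in 𝓝 t, u τ ∈ s := (hu t ht).continuousAt.preimage_mem_nhds hs
    have hws : ∀ᶠ τ in 𝓝 t, w τ ∈ s :=
      (hw t ht).continuousAt.preimage_mem_nhds (hteq ▸ hs)
    exact ODE_solution_unique_of_eventually (v := fun _ => F) (s := fun _ => s)
      (.of_forall fun _ => hlip) ((hW.and hus).mono fun τ h => ⟨hu τ h.1, h.2⟩)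
      ((hW.and hws).mono fun τ h => ⟨hw τ h.1, h.2⟩) hteq
  have hcont : ContinuousOn (fun t => (u t, w t)) W := fun t ht =>
    ((hu t ht).continuousAt.prodMk (hw t ht).continuousAt).continuousWithinAt
  have hsub : W ⊆ {t | u =ᶠ[𝓝 t] w} := by
    refine hWc.subset_left_of_subset_union isOpen_setOfPred_eventually_nhds
      (hcont.isOpen_inter_preimage hWo isClosed_diagonal.isOpen_compl) ?_ ?_
      ⟨t₀, ht₀, local_unique t₀ ht₀ heq⟩
    · exact Set.disjoint_left.2 fun t hA hB => hB.2 hA.eq_of_nhds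
    · intro t ht
      by_cases htw : u t = w t
      · exact Or.inl (local_unique t ht htw)
      · exact Or.inr ⟨ht, htw⟩
  exact fun t ht => (hsub ht).eq_of_nhds

theorem ContDiffOn.hasDerivAt_deriv {f : ℝ → E} {s : Set ℝ} {n : WithTop ℕ∞}
    (hf : ContDiffOn ℝ n f s) (hn : n ≠ 0) (hs : IsOpen s) {t : ℝ} (ht : t ∈ s) :
    HasDerivAt f (deriv f t) t :=
  ((hf.differentiableOn hn).differentiableAt (hs.mem_nhds ht)).hasDerivAt

theorem ContDiffOn.hasDerivAt_deriv_deriv {f : ℝ → E} {s : Set ℝ} (hf : ContDiffOn ℝ 2 f s)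
    (hs : IsOpen s) {t : ℝ} (ht : t ∈ s) : HasDerivAt (deriv f) (deriv (deriv f) t) t :=
  (hf.deriv_of_isOpen hs (by norm_num)).hasDerivAt_deriv one_ne_zero hs ht

end RealVariable

section Geodesic

variable {n : ℕ}

noncomputable def geodesicField (Γ : Christoffel n) (p : Vec n × Vec n) : Vec n × Vec n :=
  (p.2, -Γ p.1 p.2 p.2)

theorem contDiffAt_geodesicField {Γ : Christoffel n} {p : Vec n × Vec n} {k : WithTop ℕ∞}
    (hΓ : ContDiffAt ℝ k Γ p.1) : ContDiffAt ℝ k (geodesicField Γ) p :=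
  contDiffAt_snd.prodMk
    (((hΓ.comp p contDiffAt_fst).clm_apply contDiffAt_snd).clm_apply contDiffAt_snd).neg

theorem IsGeodesic.hasDerivAt_lift {Γ : Christoffel n} {U : Set (Vec n)} {I : Set ℝ}
    {γ : ℝ → Vec n} (hγ : IsGeodesic Γ U I γ) (hI : IsOpen I) {t : ℝ} (ht : t ∈ I) :
    HasDerivAt (fun s => (γ s, deriv γ s)) (geodesicField Γ (γ t, deriv γ t)) t := by
  have h := hγ.2.1.hasDerivAt_deriv_deriv hI ht
  rw [hγ.2.2 t ht] at h
  exact (hγ.2.1.hasDerivAt_deriv two_ne_zero hI ht).prodMk h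

theorem IsGeodesic.hasDerivAt_reparam_lift {Γ Γhat : Christoffel n} {U : Set (Vec n)}
    {I J : Set ℝ} {γ : ℝ → Vec n} (hγ : IsGeodesic Γ U I γ) (hI : IsOpen I)
    {r : ℝ → ℝ} (hr : ContDiffOn ℝ 2 r J) (hJ : IsOpen J) (hrJ : MapsTo r J I)
    {t : ℝ} (ht : t ∈ J)
    (hreq : deriv (deriv r) t • deriv γ (r t) = deriv r t ^ 2 •
      (Γ (γ (r t)) (deriv γ (r t)) (deriv γ (r t)) -
        Γhat (γ (r t)) (deriv γ (r t)) (deriv γ (r t)))) :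
    HasDerivAt (fun s => (γ (r s), deriv r s • deriv γ (r s)))
      (geodesicField Γhat (γ (r t), deriv r t • deriv γ (r t))) t := by
  have hr' := hr.hasDerivAt_deriv two_ne_zero hJ ht
  have hpos := (hγ.2.1.hasDerivAt_deriv two_ne_zero hI (hrJ ht)).scomp t hr'
  have hvel := (hr.hasDerivAt_deriv_deriv hJ ht).smul
    ((hγ.2.1.hasDerivAt_deriv_deriv hI (hrJ ht)).scomp t hr')
  rw [hγ.2.2 _ (hrJ ht)] at hvel
  refine (hpos.prodMk hvel).congr_deriv (Prod.ext rfl ?_)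
  simp only [geodesicField, Function.comp_apply, map_smul, FunLike.coe_smul,
    Pi.smul_apply, smul_smul, ← pow_two]
  rw [hreq, smul_sub]
  module

end Geodesic

theorem stmt3_general {n : ℕ} (U : Set (Vec n)) (hU : IsOpen U)
    (Γ Γhat : Christoffel n)
    (hΓhat : ContDiffOn ℝ (⊤ : ℕ∞) Γhat U)
    (I J K : Set ℝ)
    (hIopen : IsOpen I)
    (hJopen : IsOpen J) (hJconn : J.OrdConnected) (hJ0 : (0 : ℝ) ∈ J)
    (hKopen : IsOpen K) (hKconn : K.OrdConnected) (hK0 : (0 : ℝ) ∈ K)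
    (x v : Vec n)
    (γ : ℝ → Vec n) (hγ : IsGeodesic Γ U I γ)
    (hγ0 : γ 0 = x) (hγ'0 : deriv γ 0 = v)
    (r : ℝ → ℝ) (hr : ContDiffOn ℝ (2 : ℕ∞) r J)
    (hr0 : r 0 = 0) (hr'0 : deriv r 0 = 1) (hrJ : Set.MapsTo r J I)
    (hreq : ∀ t ∈ J, (deriv (deriv r) t) • deriv γ (r t) =
      (deriv r t) ^ 2 •
        (Γ (γ (r t)) (deriv γ (r t)) (deriv γ (r t)) -
          Γhat (γ (r t)) (deriv γ (r t)) (deriv γ (r t))))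
    (δ : ℝ → Vec n) (hδ : IsGeodesic Γhat U K δ)
    (hδ0 : δ 0 = x) (hδ'0 : deriv δ 0 = v) :
    ∀ t ∈ J ∩ K, δ t = γ (r t) := by
  have hlip : ∀ t ∈ J ∩ K,
      ∃ L, ∃ s ∈ 𝓝 (δ t, deriv δ t), LipschitzOnWith L (geodesicField Γhat) s :=
    fun t ht => (contDiffAt_geodesicField ((hΓhat.contDiffAt (hU.mem_nhds (hδ.1 ht.2))).of_le
      (by exact_mod_cast le_top))).exists_lipschitzOnWith
  have hlifts := ODE_solution_unique_of_isPreconnected (hJopen.inter hKopen)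
    (hJconn.inter hKconn).isPreconnected hlip
    (fun t ht => hδ.hasDerivAt_lift hKopen ht.2)
    (fun t ht => hγ.hasDerivAt_reparam_lift hIopen hr hJopen hrJ ht.1 (hreq t ht.1))
    ⟨hJ0, hK0⟩ (by simp [hr0, hr'0, hγ0, hγ'0, hδ0, hδ'0])
  exact fun t ht => congrArg Prod.fst (hlifts ht)

theorem stmt3 {n : ℕ} (U : Set (Vec n)) (hU : IsOpen U)
    (Γ Γhat : Christoffel n)
    (hΓ : ContDiffOn ℝ (⊤ : ℕ∞) Γ U) (hΓhat : ContDiffOn ℝ (⊤ : ℕ∞) Γhat U)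
    (I J K : Set ℝ)
    (hIopen : IsOpen I) (hIconn : I.OrdConnected) (hI0 : (0 : ℝ) ∈ I)
    (hJopen : IsOpen J) (hJconn : J.OrdConnected) (hJ0 : (0 : ℝ) ∈ J)
    (hKopen : IsOpen K) (hKconn : K.OrdConnected) (hK0 : (0 : ℝ) ∈ K)
    (x v : Vec n)
    (γ : ℝ → Vec n) (hγ : IsGeodesic Γ U I γ)
    (hγ0 : γ 0 = x) (hγ'0 : deriv γ 0 = v)
    (r : ℝ → ℝ) (hr : ContDiffOn ℝ (2 : ℕ∞) r J)
    (hr0 : r 0 = 0) (hr'0 : deriv r 0 = 1) (hrJ : Set.MapsTo r J I)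
    (hreq : ∀ t ∈ J, (deriv (deriv r) t) • deriv γ (r t) =
      (deriv r t) ^ 2 •
        (Γ (γ (r t)) (deriv γ (r t)) (deriv γ (r t)) -
          Γhat (γ (r t)) (deriv γ (r t)) (deriv γ (r t))))
    (δ : ℝ → Vec n) (hδ : IsGeodesic Γhat U K δ)
    (hδ0 : δ 0 = x) (hδ'0 : deriv δ 0 = v) :
    ∀ t ∈ J ∩ K, δ t = γ (r t) :=
  stmt3_general U hU Γ Γhat hΓhat I J K hIopen hJopen hJconn hJ0 hKopen hKconn hK0 x v γ hγ hγ0 hγ'0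
    r hr hr0 hr'0 hrJ hreq δ hδ hδ0 hδ'0
end

section
/- Let U ⊆ ℝⁿ be open, let Γ and Γ̂ be Christoffel fields on U with difference tensor S, let γ : I → U be a Γ-geodesic on an open interval I ∋ 0 with γ(0) = x and γ'(0) = v, and let r : J → ℝ be a C² function on an open interval J ∋ 0 with r(0) = 0, r'(0) = 1 and r(J) ⊆ I. If t ↦ γ(r(t)) is a Γ̂-geodesic on J, then r''(0)·v = S(x)(v,v). -/
open Set Filter Topology

/-! Differentiating `c = γ ∘ r` twice gives `c''(0) = r'(0)² • γ''(0) + r''(0) • γ'(0)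
= -Γ x v v + r''(0) • v`, while `c` being a `Γhat`-geodesic gives `c''(0) = -Γhat x v v`. -/

section SecondDerivative

variable {𝕜 E : Type*} [NontriviallyNormedField 𝕜] [NormedAddCommGroup E] [NormedSpace 𝕜 E]

theorem ContDiffOn.differentiableOn_deriv_of_isOpen {f : 𝕜 → E} {s : Set 𝕜}
    {n : WithTop ℕ∞} (hf : ContDiffOn 𝕜 n f s) (hs : IsOpen s) (hn : 2 ≤ n) :
    DifferentiableOn 𝕜 (deriv f) s :=
  (hf.deriv_of_isOpen hs (m := 1) hn).differentiableOn one_ne_zero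

theorem deriv_deriv_comp_s4 {f : 𝕜 → E} {r : 𝕜 → 𝕜} {t : 𝕜}
    (hf : ∀ᶠ s in 𝓝 t, DifferentiableAt 𝕜 f (r s))
    (hr : ∀ᶠ s in 𝓝 t, DifferentiableAt 𝕜 r s)
    (hf' : DifferentiableAt 𝕜 (deriv f) (r t)) (hr' : DifferentiableAt 𝕜 (deriv r) t) :
    deriv (deriv fun s => f (r s)) t =
      deriv r t ^ 2 • deriv (deriv f) (r t) + deriv (deriv r) t • deriv f (r t) := by
  have hfirst : deriv (fun s => f (r s)) =ᶠ[𝓝 t] fun s => deriv r s • deriv f (r s) := by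
    filter_upwards [hf, hr] with s hfs hrs
    exact deriv.scomp s hfs hrs
  have hsecond : HasDerivAt (fun s => deriv r s • deriv f (r s))
      (deriv r t • (deriv r t • deriv (deriv f) (r t)) + deriv (deriv r) t • deriv f (r t)) t :=
    hr'.hasDerivAt.smul (hf'.hasDerivAt.scomp t hr.self_of_nhds.hasDerivAt)
  rw [hfirst.deriv_eq, hsecond.deriv, smul_smul, sq]

end SecondDerivative

theorem stmt4_general {n : ℕ} (U : Set (Vec n))
    (Γ Γhat : Christoffel n)
    (I J : Set ℝ)
    (hIopen : IsOpen I) (hI0 : (0 : ℝ) ∈ I)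
    (hJopen : IsOpen J) (hJ0 : (0 : ℝ) ∈ J)
    (x v : Vec n)
    (γ : ℝ → Vec n) (hγ : IsGeodesic Γ U I γ)
    (hγ0 : γ 0 = x) (hγ'0 : deriv γ 0 = v)
    (r : ℝ → ℝ) (hr : ContDiffOn ℝ (2 : ℕ∞) r J)
    (hr0 : r 0 = 0) (hr'0 : deriv r 0 = 1) (hrJ : Set.MapsTo r J I)
    (hgeo : IsGeodesic Γhat U J (fun t => γ (r t))) :
    (deriv (deriv r) 0) • v = Γ x v v - Γhat x v v := by
  have hJ : J ∈ 𝓝 0 := hJopen.mem_nhds hJ0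
  have hγdiff : ∀ᶠ t in 𝓝 0, DifferentiableAt ℝ γ (r t) := by
    filter_upwards [hJ] with t ht
    exact (hγ.2.1.differentiableOn two_ne_zero).differentiableAt (hIopen.mem_nhds (hrJ ht))
  have hrdiff : ∀ᶠ t in 𝓝 0, DifferentiableAt ℝ r t := by
    filter_upwards [hJ] with t ht
    exact (hr.differentiableOn two_ne_zero).differentiableAt (hJopen.mem_nhds ht)
  have hc' : deriv (fun t => γ (r t)) 0 = v := by
    refine (deriv.scomp 0 hγdiff.self_of_nhds hrdiff.self_of_nhds).trans ?_
    rw [hr'0, hr0, hγ'0, one_smul]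
  have hγ'' : deriv (deriv γ) 0 = -Γ x v v := by
    rw [hγ.2.2 0 hI0, hγ0, hγ'0]
  have hc'' : deriv (deriv fun t => γ (r t)) 0 = -Γhat x v v := by
    rw [hgeo.2.2 0 hJ0, hc']
    simp only [hr0, hγ0]
  have hchain := deriv_deriv_comp_s4 hγdiff hrdiff
    ((hγ.2.1.differentiableOn_deriv_of_isOpen hIopen le_rfl).differentiableAt
      (hIopen.mem_nhds (by rwa [hr0])))
    ((hr.differentiableOn_deriv_of_isOpen hJopen le_rfl).differentiableAt hJ)
  rw [hc'', hr0, hr'0, hγ'', hγ'0] at hchain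
  linear_combination (norm := module) -hchain

theorem stmt4 {n : ℕ} (U : Set (Vec n)) (hU : IsOpen U)
    (Γ Γhat : Christoffel n)
    (hΓ : ContDiffOn ℝ (⊤ : ℕ∞) Γ U) (hΓhat : ContDiffOn ℝ (⊤ : ℕ∞) Γhat U)
    (I J : Set ℝ)
    (hIopen : IsOpen I) (hIconn : I.OrdConnected) (hI0 : (0 : ℝ) ∈ I)
    (hJopen : IsOpen J) (hJconn : J.OrdConnected) (hJ0 : (0 : ℝ) ∈ J)
    (x v : Vec n)
    (γ : ℝ → Vec n) (hγ : IsGeodesic Γ U I γ)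
    (hγ0 : γ 0 = x) (hγ'0 : deriv γ 0 = v)
    (r : ℝ → ℝ) (hr : ContDiffOn ℝ (2 : ℕ∞) r J)
    (hr0 : r 0 = 0) (hr'0 : deriv r 0 = 1) (hrJ : Set.MapsTo r J I)
    (hgeo : IsGeodesic Γhat U J (fun t => γ (r t))) :
    (deriv (deriv r) 0) • v = Γ x v v - Γhat x v v :=
  stmt4_general U Γ Γhat I J hIopen hI0 hJopen hJ0 x v γ hγ hγ0 hγ'0 r hr hr0 hr'0 hrJ hgeo
end

section
/- Let U ⊆ ℝᵐ be open and n ≥ 1. Let S : U → Bil(ℝⁿ × ℝⁿ, ℝⁿ) be a smooth map into the space of bilinear maps ℝⁿ × ℝⁿ → ℝⁿ such that S(x) is symmetric for each x ∈ U, and let h : U × ℝⁿ → ℝ be a smooth function such that S(x)(v,v) = h(x,v)·v for all x ∈ U and v ∈ ℝⁿ. Then there exists a unique smooth map α : U → (ℝⁿ)* (into the dual space of ℝⁿ) such that h(x,v) = α(x)(v) for all x ∈ U, v ∈ ℝⁿ, and S(x)(v,w) = (1/2)·(α(x)(v)·w + α(x)(w)·v) for all x ∈ U and v,w ∈ ℝⁿ.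 -/
/-!
Fix `x` and write `f = h (x, ·)`, `B = S x`. Comparing `B (t • v) (t • v) = t² • B v v` with
`f (t • v) • t • v` gives `f (t • v) = t * f v` for `t, v ≠ 0`; the identity `B v v = f v • v` says
nothing about `f 0`, which continuity forces to be `0`. Expanding `B (v ± w) (v ± w)` and adding
gives `f (v + w) = f v + f w` for linearly independent `v, w`, and homogeneity covers the
dependent case. So `f` is linear, polarization gives `B v w + B w v = f v • w + f w • v`, and
symmetry of `B` halves it. Since `ℝⁿ` is finite-dimensional, `α` is as smooth as its values
`α x v = h (x, v)`.
-/

open Set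

open Filter Topology

section

variable {𝕜 E : Type*} [Field 𝕜] [AddCommGroup E] [Module 𝕜 E] {B : E →ₗ[𝕜] E →ₗ[𝕜] E}
  {f : E → 𝕜}

theorem map_smul_of_apply_self_eq_smul_of_ne_zero (hB : ∀ v, B v v = f v • v) {t : 𝕜}
    (ht : t ≠ 0) {v : E} (hv : v ≠ 0) : f (t • v) = t * f v := by
  have h : (f (t • v) * t) • v = (t * f v * t) • v := by
    calc (f (t • v) * t) • v = B (t • v) (t • v) := by rw [hB, smul_smul]
      _ = (t * f v * t) • v := by
        simp only [map_smul, LinearMap.smul_apply, hB]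
        module
  exact mul_right_cancel₀ ht (smul_left_injective 𝕜 hv h)

theorem map_smul_of_apply_self_eq_smul (hB : ∀ v, B v v = f v • v) (hf : f 0 = 0) (t : 𝕜)
    (v : E) : f (t • v) = t * f v := by
  rcases eq_or_ne t 0 with rfl | ht
  · rw [zero_smul, hf, zero_mul]
  rcases eq_or_ne v 0 with rfl | hv
  · rw [smul_zero, hf, mul_zero]
  exact map_smul_of_apply_self_eq_smul_of_ne_zero hB ht hv

theorem apply_add_apply_self (B : E →ₗ[𝕜] E →ₗ[𝕜] E) (v w : E) :
    B (v + w) (v + w) = B v v + B w w + (B v w + B w v) := by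
  simp only [map_add, LinearMap.add_apply]
  abel

variable [NeZero (2 : 𝕜)]

theorem map_add_of_apply_self_eq_smul (hB : ∀ v, B v v = f v • v) (hf : f 0 = 0) (v w : E) :
    f (v + w) = f v + f w := by
  rcases eq_or_ne w 0 with rfl | hw
  · rw [add_zero, hf, add_zero]
  by_cases hdep : ∃ a : 𝕜, a • w = v
  · obtain ⟨a, rfl⟩ := hdep
    rw [show a • w + w = (a + 1) • w by module, map_smul_of_apply_self_eq_smul hB hf,
      map_smul_of_apply_self_eq_smul hB hf, add_one_mul]
  have hli : LinearIndependent 𝕜 ![w, v] :=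
    (LinearIndependent.pair_iff' hw).mpr (by simpa using hdep)
  have hsum := apply_add_apply_self B v w
  have hdiff := apply_add_apply_self B v (-w)
  simp only [hB, map_neg, LinearMap.neg_apply, neg_neg] at hsum hdiff
  obtain ⟨h1, h2⟩ := LinearIndependent.pair_iff.mp hli
    (f (v + w) - f (v + -w) - 2 * f w) (f (v + w) + f (v + -w) - 2 * f v)
    (by linear_combination (norm := module) hsum + hdiff)
  have htwice : (2 : 𝕜) * f (v + w) = 2 * (f v + f w) := by linear_combination h1 + h2
  exact mul_left_cancel₀ two_ne_zero htwice

theorem isLinearMap_of_apply_self_eq_smul (hB : ∀ v, B v v = f v • v) (hf : f 0 = 0) :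
    IsLinearMap 𝕜 f :=
  ⟨map_add_of_apply_self_eq_smul hB hf, map_smul_of_apply_self_eq_smul hB hf⟩

theorem apply_add_apply_swap_of_apply_self_eq_smul (hB : ∀ v, B v v = f v • v) (hf : f 0 = 0)
    (v w : E) : B v w + B w v = f v • w + f w • v := by
  have hsum := apply_add_apply_self B v w
  rw [hB, hB, hB, map_add_of_apply_self_eq_smul hB hf] at hsum
  linear_combination (norm := module) -hsum

theorem apply_eq_half_smul_of_apply_self_eq_smul (hB : ∀ v, B v v = f v • v) (hf : f 0 = 0)
    (hsymm : ∀ v w, B v w = B w v) (v w : E) :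
    B v w = (1 / 2 : 𝕜) • (f v • w + f w • v) := by
  rw [← apply_add_apply_swap_of_apply_self_eq_smul hB hf, hsymm w v, smul_add, ← add_smul,
    add_halves, one_smul]

end

theorem map_zero_of_apply_self_eq_smul {𝕜 E : Type*} [NontriviallyNormedField 𝕜]
    [AddCommGroup E] [Module 𝕜 E] [TopologicalSpace E] [ContinuousSMul 𝕜 E] [Nontrivial E]
    {B : E →ₗ[𝕜] E →ₗ[𝕜] E} {f : E → 𝕜} (hB : ∀ v, B v v = f v • v) (hf : ContinuousAt f 0) :
    f 0 = 0 := by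
  obtain ⟨v, hv⟩ := exists_ne (0 : E)
  have hline : Tendsto (fun t : 𝕜 => f (t • v)) (𝓝[≠] 0) (𝓝 (f 0)) :=
    (hf.tendsto.comp (((continuous_id.smul continuous_const).tendsto' 0 0
      (zero_smul 𝕜 v)).mono_left nhdsWithin_le_nhds))
  have hlin : Tendsto (fun t : 𝕜 => f (t • v)) (𝓝[≠] 0) (𝓝 0) :=
    (((continuous_mul_const (f v)).tendsto' 0 0 (zero_mul _)).mono_left
      nhdsWithin_le_nhds).congr' (eventually_nhdsWithin_of_forall fun t ht =>
        (map_smul_of_apply_self_eq_smul_of_ne_zero hB ht hv).symm)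
  exact tendsto_nhds_unique hline hlin

theorem exists_contDiffOn_clm_eq_of_isLinearMap {𝕜 D E F : Type*} [NontriviallyNormedField 𝕜]
    [CompleteSpace 𝕜] [NormedAddCommGroup D] [NormedSpace 𝕜 D] [NormedAddCommGroup E]
    [NormedSpace 𝕜 E] [FiniteDimensional 𝕜 E] [NormedAddCommGroup F] [NormedSpace 𝕜 F]
    {k : WithTop ℕ∞} {s : Set D} {g : D × E → F} (hg : ContDiffOn 𝕜 k g (s ×ˢ univ))
    (hlin : ∀ x ∈ s, IsLinearMap 𝕜 fun v => g (x, v)) :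
    ∃ α : D → E →L[𝕜] F, ContDiffOn 𝕜 k α s ∧ ∀ x ∈ s, ∀ v, α x v = g (x, v) := by
  classical
  let α : D → E →L[𝕜] F := fun x =>
    if hx : x ∈ s then LinearMap.toContinuousLinearMap ((hlin x hx).mk' _) else 0
  have hα : ∀ x ∈ s, ∀ v, α x v = g (x, v) := fun x hx v => by simp [α, hx]
  refine ⟨α, contDiffOn_clm_apply.mpr fun v => ?_, hα⟩
  refine (hg.comp (contDiffOn_id.prodMk contDiffOn_const) fun x hx => ⟨hx, mem_univ v⟩).congr ?_
  exact fun x hx => hα x hx v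

theorem stmt5_general {m n : ℕ} (hn : 1 ≤ n) (U : Set (Vec m))
    (S : Vec m → Vec n →L[ℝ] Vec n →L[ℝ] Vec n)
    (hSsym : ∀ x ∈ U, ∀ v w : Vec n, S x v w = S x w v)
    (h : Vec m × Vec n → ℝ)
    (hh : ContDiffOn ℝ (⊤ : ℕ∞) h (U ×ˢ (univ : Set (Vec n))))
    (hSh : ∀ x ∈ U, ∀ v : Vec n, S x v v = h (x, v) • v) :
    ∃ α : Vec m → (Vec n →L[ℝ] ℝ),
      (ContDiffOn ℝ (⊤ : ℕ∞) α U ∧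
        (∀ x ∈ U, ∀ v : Vec n, h (x, v) = α x v) ∧
        (∀ x ∈ U, ∀ v w : Vec n,
          S x v w = (1/2 : ℝ) • (α x v • w + α x w • v))) ∧
      ∀ β : Vec m → (Vec n →L[ℝ] ℝ),
        (ContDiffOn ℝ (⊤ : ℕ∞) β U ∧
          (∀ x ∈ U, ∀ v : Vec n, h (x, v) = β x v) ∧
          (∀ x ∈ U, ∀ v w : Vec n,
            S x v w = (1/2 : ℝ) • (β x v • w + β x w • v))) →
        Set.EqOn α β U := by
  have : NeZero n := ⟨by omega⟩
  have hdiag (x) (hx : x ∈ U) (v : Vec n) : (S x).toLinearMap₁₂ v v = h (x, v) • v :=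
    hSh x hx v
  have hzero (x) (hx : x ∈ U) : h (x, 0) = 0 := by
    refine map_zero_of_apply_self_eq_smul (hdiag x hx) ?_
    exact (hh.continuousOn.comp (Continuous.prodMk_right x).continuousOn
      fun v _ => ⟨hx, mem_univ v⟩).continuousAt univ_mem
  obtain ⟨α, hα, hαh⟩ := exists_contDiffOn_clm_eq_of_isLinearMap hh fun x hx =>
    isLinearMap_of_apply_self_eq_smul (hdiag x hx) (hzero x hx)
  refine ⟨α, ⟨hα, fun x hx v => (hαh x hx v).symm, fun x hx v w => ?_⟩,
    fun β ⟨_, hβ, _⟩ x hx => ContinuousLinearMap.ext fun v => by rw [hαh x hx, hβ x hx]⟩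
  rw [hαh x hx, hαh x hx]
  exact apply_eq_half_smul_of_apply_self_eq_smul (hdiag x hx) (hzero x hx) (hSsym x hx) v w

theorem stmt5 {m n : ℕ} (hn : 1 ≤ n) (U : Set (Vec m)) (hU : IsOpen U)
    (S : Vec m → Vec n →L[ℝ] Vec n →L[ℝ] Vec n)
    (hS : ContDiffOn ℝ (⊤ : ℕ∞) S U)
    (hSsym : ∀ x ∈ U, ∀ v w : Vec n, S x v w = S x w v)
    (h : Vec m × Vec n → ℝ)
    (hh : ContDiffOn ℝ (⊤ : ℕ∞) h (U ×ˢ (univ : Set (Vec n))))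
    (hSh : ∀ x ∈ U, ∀ v : Vec n, S x v v = h (x, v) • v) :
    ∃ α : Vec m → (Vec n →L[ℝ] ℝ),
      (ContDiffOn ℝ (⊤ : ℕ∞) α U ∧
        (∀ x ∈ U, ∀ v : Vec n, h (x, v) = α x v) ∧
        (∀ x ∈ U, ∀ v w : Vec n,
          S x v w = (1/2 : ℝ) • (α x v • w + α x w • v))) ∧
      ∀ β : Vec m → (Vec n →L[ℝ] ℝ),
        (ContDiffOn ℝ (⊤ : ℕ∞) β U ∧
          (∀ x ∈ U, ∀ v : Vec n, h (x, v) = β x v) ∧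
          (∀ x ∈ U, ∀ v w : Vec n,
            S x v w = (1/2 : ℝ) • (β x v • w + β x w • v))) →
        Set.EqOn α β U :=
  stmt5_general hn U S hSsym h hh hSh
end

section
/- Let E be a nonzero finite-dimensional real normed vector space, let S : E × E → E be a symmetric bilinear map, and let h : E → ℝ be a continuous function such that S(v,v) = h(v)·v for all v ∈ E. Then h is linear, and S(v,w) = (1/2)·(h(v)·w + h(w)·v) for all v,w ∈ E. -/
/-!
Comparing `S (t • v) (t • v) = t ^ 2 • S v v` with `h (t • v) • t • v` shows that `h` is homogeneous
away from `0`, and continuity forces `h 0 = 0`. For linearly independent `v, w`, adding the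
expansions of `S (v ± w) (v ± w)` eliminates the mixed terms and, after comparing coefficients,
gives `h (v + w) = h v + h w`; dependent pairs are covered by homogeneity. Once `h` is linear,
expanding `S (v + w) (v + w)` is the polarization formula.
-/

section Algebra

variable {K V : Type*} [Field K] [AddCommGroup V] [Module K V]
  {S : V →ₗ[K] V →ₗ[K] V} {h : V → K}

theorem apply_smul_of_diag_eq_smul_of_ne_zero (hS : ∀ v, S v v = h v • v) {t : K} {v : V}
    (ht : t ≠ 0) (hv : v ≠ 0) : h (t • v) = t * h v := by
  have hcoeff : (h (t • v) * t) • v = (t * t * h v) • v :=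
    calc (h (t • v) * t) • v = S (t • v) (t • v) := by rw [hS, smul_smul]
      _ = (t * t * h v) • v := by
        simp only [map_smul, LinearMap.smul_apply, hS v, smul_smul, mul_assoc]
  exact mul_right_cancel₀ ht (by linear_combination smul_left_injective K hv hcoeff)

theorem apply_smul_of_diag_eq_smul (hS : ∀ v, S v v = h v • v) (h0 : h 0 = 0) (t : K) (v : V) :
    h (t • v) = t * h v := by
  rcases eq_or_ne t 0 with rfl | ht
  · simp [h0]
  rcases eq_or_ne v 0 with rfl | hv
  · simp [h0]
  exact apply_smul_of_diag_eq_smul_of_ne_zero hS ht hv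

theorem apply_add_of_diag_eq_smul_of_linearIndependent [NeZero (2 : K)]
    (hS : ∀ v, S v v = h v • v) {v w : V} (hvw : LinearIndependent K ![v, w]) :
    h (v + w) = h v + h w := by
  have hplus := hS (v + w)
  have hminus := hS (v - w)
  simp only [map_add, map_sub, LinearMap.add_apply, LinearMap.sub_apply, hS v, hS w]
    at hplus hminus
  have hsum : (h (v + w) + h (v - w) - 2 * h v) • v
      + (h (v + w) - h (v - w) - 2 * h w) • w = 0 := by
    linear_combination (norm := module) -hplus - hminus
  obtain ⟨hv, hw⟩ := LinearIndependent.pair_iff.mp hvw _ _ hsum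
  exact mul_left_cancel₀ (two_ne_zero (α := K)) (by linear_combination hv + hw)

theorem isLinearMap_of_diag_eq_smul [NeZero (2 : K)] (hS : ∀ v, S v v = h v • v)
    (h0 : h 0 = 0) : IsLinearMap K h := by
  refine ⟨fun v w => ?_, apply_smul_of_diag_eq_smul hS h0⟩
  rcases eq_or_ne v 0 with rfl | hv
  · simp [h0]
  by_cases hvw : LinearIndependent K ![v, w]
  · exact apply_add_of_diag_eq_smul_of_linearIndependent hS hvw
  obtain ⟨c, rfl⟩ : ∃ c : K, c • v = w := by
    simpa [LinearIndependent.pair_iff' hv] using hvw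
  rw [show v + c • v = (1 + c) • v by module, apply_smul_of_diag_eq_smul hS h0, apply_smul_of_diag_eq_smul hS h0,
    add_mul, one_mul]

theorem add_swap_of_diag_eq_smul (hS : ∀ v, S v v = h v • v) (hlin : IsLinearMap K h) (v w : V) :
    S v w + S w v = h v • w + h w • v := by
  have hplus := hS (v + w)
  simp only [map_add, LinearMap.add_apply, hS v, hS w, hlin.map_add] at hplus
  linear_combination (norm := module) hplus

end Algebra

theorem apply_zero_eq_zero_of_diag_eq_smul {K V : Type*} [NontriviallyNormedField K]
    [AddCommGroup V] [Module K V] [TopologicalSpace V] [ContinuousSMul K V] [Nontrivial V]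
    {S : V →ₗ[K] V →ₗ[K] V} {h : V → K} (hS : ∀ v, S v v = h v • v) (hh : Continuous h) :
    h 0 = 0 := by
  obtain ⟨v, hv⟩ := exists_ne (0 : V)
  have hline : (fun t : K => h (t • v)) = fun t => t * h v :=
    Continuous.ext_on (dense_compl_singleton 0) (hh.comp (continuous_id.smul continuous_const))
      (continuous_id.mul continuous_const)
      fun t ht => apply_smul_of_diag_eq_smul_of_ne_zero hS ht hv
  simpa using congrFun hline 0

theorem stmt6_general {E : Type*} [NormedAddCommGroup E] [NormedSpace ℝ E]
    [Nontrivial E]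
    (S : E →ₗ[ℝ] E →ₗ[ℝ] E) (hSsym : ∀ v w : E, S v w = S w v)
    (h : E → ℝ) (hh : Continuous h)
    (hS : ∀ v : E, S v v = h v • v) :
    IsLinearMap ℝ h ∧ ∀ v w : E, S v w = (1/2 : ℝ) • (h v • w + h w • v) := by
  have hlin := isLinearMap_of_diag_eq_smul hS (apply_zero_eq_zero_of_diag_eq_smul hS hh)
  refine ⟨hlin, fun v w => ?_⟩
  have hpolar := add_swap_of_diag_eq_smul hS hlin v w
  rw [hSsym w v] at hpolar
  linear_combination (norm := module) (1/2 : ℝ) • hpolar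

theorem stmt6 {E : Type*} [NormedAddCommGroup E] [NormedSpace ℝ E]
    [FiniteDimensional ℝ E] [Nontrivial E]
    (S : E →ₗ[ℝ] E →ₗ[ℝ] E) (hSsym : ∀ v w : E, S v w = S w v)
    (h : E → ℝ) (hh : Continuous h)
    (hS : ∀ v : E, S v v = h v • v) :
    IsLinearMap ℝ h ∧ ∀ v w : E, S v w = (1/2 : ℝ) • (h v • w + h w • v) :=
  stmt6_general S hSsym h hh hS
end
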